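/- For every α with 1/2 < α < 3/4, the detection boundary of the minimal p-value method strictly exceeds the optimal detection boundary: (1 − √(1−α))² > α − 1/2. Moreover, for 3/4 ≤ α < 1 the two boundaries coincide. -/
import Mathlib

noncomputable def rstar (α : ℝ) : ℝ :=
  if α < 3/4 then α - 1/2 else (1 - Real.sqrt (1 - α))^2

noncomputable def rMP (α : ℝ) : ℝ := (1 - Real.sqrt (1 - α))^2

theorem minP_suboptimal :
    (∀ α : ℝ, 1/2 < α → α < 3/4 → rMP α > α - 1/2) ∧
    (∀ α : ℝ, 3/4 ≤ α → α < 1 → rMP α = rstar α) := by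
  constructor
  · intro α h1 h2
    have hs2 : Real.sqrt (1 - α) ^ 2 = 1 - α := Real.sq_sqrt (by linarith)
    have hlt : Real.sqrt (1 - α) < 5/4 - α := by
      rw [show (5/4 - α : ℝ) = Real.sqrt ((5/4 - α)^2) from
        (Real.sqrt_sq (by linarith)).symm]
      apply Real.sqrt_lt_sqrt (by linarith)
      nlinarith [sq_nonneg (α - 3/4)]
    unfold rMP
    nlinarith [hs2, hlt]
  · intro α h1 _
    unfold rMP rstar
    rw [if_neg (not_lt.mpr h1)]
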